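/- Let S ⊆ ℕ and α be an S-RTSG solution. If ℓ is a local simulation from α such that its target Γ_{Φ_ℓ} is an RTSG-candidate with special states (★_β, B_β, Q_β, S_β) matching ℓ as in compliance condition (0), and Γ_{Φ_ℓ} is an S-RTSG solution, then ℓ satisfies compliance condition (2): for every (★_α, c₀, c₁) ∈ dom(δ_α) occurring at position (t−1, boundary) in a diagram of α, ℓ_s(★_α, c₀, c₁) = S_β iff δ_α(★_α, c₀, c₁) = S_α. -/
import Mathlib


/-- A cellular automaton with state type `σ`: a finite state set, a set of initial
configurations, a partial local transition function (as an `Option`-valued function),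
and its (totally defined) space-time diagrams. -/
structure CA (σ : Type) where
  fin : Finite σ
  I : Set (ℤ → σ)
  δ : σ → σ → σ → Option σ
  D : (ℤ → σ) → ℕ → ℤ → σ
  D_zero : ∀ c ∈ I, D c 0 = c
  D_succ : ∀ c ∈ I, ∀ t p, δ (D c t (p - 1)) (D c t p) (D c t (p + 1)) = some (D c (t + 1) p)

/-- The family of space-time diagrams associated to a CA. -/
def CA.Fam {σ : Type} (α : CA σ) : Set (ℕ → ℤ → σ) := { d | ∃ c ∈ α.I, d = α.D c }

/-- The local transition relation of a family of space-time diagrams. -/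
def locRel {σ : Type} (F : Set (ℕ → ℤ → σ)) (x y z w : σ) : Prop :=
  ∃ d ∈ F, ∃ t : ℕ, ∃ p : ℤ,
    d t (p - 1) = x ∧ d t p = y ∧ d t (p + 1) = z ∧ d (t + 1) p = w

/-- A family of space-time diagrams is deterministic when its local transition
relation is functional. -/
def Deterministic {σ : Type} (F : Set (ℕ → ℤ → σ)) : Prop :=
  ∀ x y z w w', locRel F x y z w → locRel F x y z w' → w = w'

/-- `β` is the cellular automaton associated to the family `F`: its initial
configurations are the time-0 slices of `F` and its local transition function is
the local transition relation of `F`. -/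
def IsGamma {σ : Type} (F : Set (ℕ → ℤ → σ)) (β : CA σ) : Prop :=
  β.I = { c | ∃ d ∈ F, c = fun p => d 0 p } ∧
  ∀ x y z w, β.δ x y z = some w ↔ locRel F x y z w

/-- A local mapping: a map on initial states and a map on local configurations. -/
structure LocalMap (σ X : Type) where
  lz : σ → X
  ls : σ → σ → σ → X

/-- The image of a space-time diagram under a local mapping. -/
def LocalMap.map {σ X : Type} (ℓ : LocalMap σ X) (d : ℕ → ℤ → σ) : ℕ → ℤ → X
  | 0, p => ℓ.lz (d 0 p)
  | t + 1, p => ℓ.ls (d t (p - 1)) (d t p) (d t (p + 1))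

/-- The family of diagrams associated to a local mapping from the CA `α`. -/
def LocalMap.Phi {σ X : Type} (ℓ : LocalMap σ X) (α : CA σ) : Set (ℕ → ℤ → X) :=
  { e | ∃ c ∈ α.I, e = ℓ.map (α.D c) }

/-- A local mapping is a local simulation from `α` to `β` when its associated family
is deterministic and `β` is the associated CA of that family. -/
def IsLocalSim {σ X : Type} (ℓ : LocalMap σ X) (α : CA σ) (β : CA X) : Prop :=
  Deterministic (ℓ.Phi α) ∧ IsGamma (ℓ.Phi α) β

/-- The RTSG initial configuration: outside state on `p ≤ 0`, `B` at `p = 1`,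
quiescent `Q` on `p ≥ 2`. -/
def rtsgInit {σ : Type} (star B Q : σ) : ℤ → σ :=
  fun p => if p ≤ 0 then star else if p = 1 then B else Q

/-- An RTSG-candidate cellular automaton. -/
structure RTSGCand (σ : Type) extends CA σ where
  star : σ
  B : σ
  Q : σ
  Sgen : σ
  init : I = {rtsgInit star B Q}
  outside : ∀ x y z w, δ x y z = some w → (w = star ↔ y = star)
  quiescent : δ Q Q Q = some Q ∧ δ star Q Q = some Q

/-- The RTSG initial configuration of an RTSG-candidate. -/
def RTSGCand.init0 {σ : Type} (α : RTSGCand σ) : ℤ → σ := rtsgInit α.star α.B α.Q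

/-- The space-time diagram of an RTSG-candidate from its RTSG initial configuration. -/
def RTSGCand.diag {σ : Type} (α : RTSGCand σ) : ℕ → ℤ → σ := α.D α.init0

/-- An RTSG-candidate is an `S`-RTSG solution when the leftmost (interior) cell is in
the special generating state exactly at the times belonging to `S`. -/
def IsSolution {σ : Type} (S : Set ℕ) (α : RTSGCand σ) : Prop :=
  ∀ t : ℕ, α.diag t 1 = α.Sgen ↔ t ∈ S

/-- RTSG-compliance of a local mapping between RTSG-candidates: conditions (0)-(3). -/
def Compliant {σ σ' : Type} (ℓ : LocalMap σ σ') (α : RTSGCand σ) (β : RTSGCand σ') : Prop :=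
  (ℓ.lz α.star = β.star ∧ ℓ.lz α.B = β.B ∧ ℓ.lz α.Q = β.Q) ∧
  (∀ x y z, (α.δ x y z).isSome → (ℓ.ls x y z = β.star ↔ y = α.star)) ∧
  (∀ y z w, α.δ α.star y z = some w → (ℓ.ls α.star y z = β.Sgen ↔ w = α.Sgen)) ∧
  (ℓ.ls α.Q α.Q α.Q = β.Q ∧ ℓ.ls α.star α.Q α.Q = β.Q)

/-- necessity of compliance condition (2).  If `ℓ` is a local
simulation from an `S`-RTSG solution `α` to an RTSG-candidate `β` satisfying
compliance condition (0), and `β` is an `S`-RTSG solution, then for every boundary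
local configuration `(★_α, c₀, c₁)` occurring in the diagram of `α` and lying in
`dom(δ_α)`, we have `ℓ_s(★_α, c₀, c₁) = S_β ↔ δ_α(★_α, c₀, c₁) = S_α`. -/
theorem solution_target_implies_condition_two {σ σ' : Type} (S : Set ℕ)
    (α : RTSGCand σ) (hα : IsSolution S α) (β : RTSGCand σ')
    (ℓ : LocalMap σ σ') (hsim : IsLocalSim ℓ α.toCA β.toCA)
    (h0 : ℓ.lz α.star = β.star ∧ ℓ.lz α.B = β.B ∧ ℓ.lz α.Q = β.Q)
    (hβ : IsSolution S β) :
    ∀ t : ℕ, ∀ w : σ,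
      α.δ α.star (α.diag t 1) (α.diag t 2) = some w →
      (ℓ.ls α.star (α.diag t 1) (α.diag t 2) = β.Sgen ↔ w = α.Sgen) := by
  obtain ⟨hdet, hI, hδ⟩ := hsim
  have hαI : α.init0 ∈ α.toCA.I := by rw [α.init]; rfl
  -- boundary cell stays star
  have hstar : ∀ t, α.diag t 0 = α.star := by
    intro t
    induction t with
    | zero =>
      show α.toCA.D α.init0 0 0 = α.star
      rw [α.D_zero α.init0 hαI]
      simp [RTSGCand.init0, rtsgInit]
    | succ t ih =>
      have h := α.D_succ α.init0 hαI t 0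
      exact (α.outside _ _ _ _ h).mpr ih
  -- the image diagram
  set e := ℓ.map α.diag with he
  have heF : e ∈ ℓ.Phi α.toCA := ⟨α.init0, hαI, rfl⟩
  have erec : ∀ t p, β.toCA.δ (e t (p - 1)) (e t p) (e t (p + 1)) = some (e (t + 1) p) := by
    intro t p
    exact (hδ _ _ _ _).mpr ⟨e, heF, t, p, rfl, rfl, rfl, rfl⟩
  have hβI : β.init0 ∈ β.toCA.I := by rw [β.init]; rfl
  have he0 : e 0 = β.init0 := by
    have hmem : (fun p => e 0 p) ∈ β.toCA.I := by rw [hI]; exact ⟨e, heF, rfl⟩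
    rw [β.init] at hmem
    exact hmem
  have hed : ∀ t p, e t p = β.diag t p := by
    intro t
    induction t with
    | zero =>
      intro p
      show e 0 p = β.toCA.D β.init0 0 p
      rw [β.D_zero β.init0 hβI, he0]
    | succ t ih =>
      intro p
      have h1 := erec t p
      have h2 := β.D_succ β.init0 hβI t p
      rw [ih (p - 1), ih p, ih (p + 1)] at h1
      have := h1.symm.trans h2
      exact Option.some_injective _ this
  intro t w hw
  have h := α.D_succ α.init0 hαI t 1
  have h01 : (1 : ℤ) - 1 = 0 := by norm_num
  have h12 : (1 : ℤ) + 1 = 2 := by norm_num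
  rw [h01, h12] at h
  have hb : α.toCA.D α.init0 t 0 = α.star := hstar t
  rw [hb] at h
  have hww : w = α.diag (t + 1) 1 := Option.some_injective _ ((hw.symm.trans h))
  have hls : ℓ.ls α.star (α.diag t 1) (α.diag t 2) = e (t + 1) 1 := by
    show _ = ℓ.ls (α.diag t (1 - 1)) (α.diag t 1) (α.diag t (1 + 1))
    rw [h01, h12, hstar t]
  rw [hls, hed (t + 1) 1, hww]
  exact (hβ (t + 1)).trans (hα (t + 1)).symm
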